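/- arXiv:2004.01762 — 2 statements merged into one kernel-verified Lean document; each statement's English description precedes it below -/
import Mathlib

section
/- On an oriented pseudo-Riemannian manifold of dimension n = 2k, the one-form ρ^Φ_i := (1/(2k−1)!) ε_i{}^{i₂…i_{2k}} Φ^{t₁…t_k}_{s₁…s_k} C_{t₁}{}^{s₁}{}_{i₂} W_{t₂}{}^{s₂}{}_{i₃i₄} ⋯ W_{t_k}{}^{s_k}{}_{i_{2k-1}i_{2k}} + (1/(2k)) ∇_i p_Φ(W) is conformally invariant of weight −2k: e^{2kΥ} ρ̂^Φ_i = ρ^Φ_i for ĝ = e^{2Υ}g. -/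
open scoped BigOperators

noncomputable def kron {n : ℕ} (i j : Fin n) : ℝ := if i = j then 1 else 0

/-- Components of the volume form in an oriented orthonormal frame. -/
noncomputable def vol {n : ℕ} (i : Fin n → Fin n) : ℝ :=
  Matrix.det (Matrix.of fun a b => kron (i a) b)

def d0 {k : ℕ} (a : Fin k) : Fin (2 * k) := ⟨2 * a.val, by have := a.isLt; omega⟩
def d1 {k : ℕ} (a : Fin k) : Fin (2 * k) := ⟨2 * a.val + 1, by have := a.isLt; omega⟩
def e1 {K : ℕ} (a : Fin K) : Fin (2 * K + 1) := ⟨2 * a.val + 1, by have := a.isLt; omega⟩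
def e2 {K : ℕ} (a : Fin K) : Fin (2 * K + 1) := ⟨2 * a.val + 2, by have := a.isLt; omega⟩

/-- The Pontrjagin potential
`p_Φ(W) = (1/(2k)!) ε^{i₁…i_{2k}} Φ^{t₁…t_k}_{s₁…s_k} W_{t₁}{}^{s₁}{}_{i₁i₂} ⋯ W_{t_k}{}^{s_k}{}_{i_{2k-1}i_{2k}}`
in dimension `2k` (orthonormal frame). -/
noncomputable def pPhi {k : ℕ}
    (Φ : (Fin k → Fin (2 * k)) → (Fin k → Fin (2 * k)) → ℝ)
    (W : Fin (2 * k) → Fin (2 * k) → Fin (2 * k) → Fin (2 * k) → ℝ) : ℝ :=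
  (1 / (Nat.factorial (2 * k) : ℝ)) *
    ∑ J : Fin (2 * k) → Fin (2 * k), vol J *
      ∑ t : Fin k → Fin (2 * k), ∑ s : Fin k → Fin (2 * k),
        Φ t s * ∏ a : Fin k, W (t a) (s a) (J (d0 a)) (J (d1 a))

/-- The one-form `ρ^Φ` of \eqref{eqn:rho-Phi} in dimension `n = 2k` (`k = K+1`),
from mixed Weyl components `W`, mixed Cotton components `C`, the volume factor `ε`,
and `Dp i = ∇_i p_Φ(W)`. -/
noncomputable def rhoPhi {K : ℕ}
    (Φ : (Fin (K + 1) → Fin (2 * (K + 1))) → (Fin (K + 1) → Fin (2 * (K + 1))) → ℝ)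
    (ε : (Fin (2 * (K + 1)) → Fin (2 * (K + 1))) → ℝ)
    (W : Fin (2 * (K + 1)) → Fin (2 * (K + 1)) → Fin (2 * (K + 1)) → Fin (2 * (K + 1)) → ℝ)
    (C : Fin (2 * (K + 1)) → Fin (2 * (K + 1)) → Fin (2 * (K + 1)) → ℝ)
    (Dp : Fin (2 * (K + 1)) → ℝ) (i : Fin (2 * (K + 1))) : ℝ :=
  (1 / (Nat.factorial (2 * K + 1) : ℝ)) *
    (∑ J : Fin (2 * K + 1) → Fin (2 * (K + 1)), ε (Fin.cons i J) *
      ∑ t : Fin (K + 1) → Fin (2 * (K + 1)), ∑ s : Fin (K + 1) → Fin (2 * (K + 1)),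
        Φ t s * C (t 0) (s 0) (J 0) *
          ∏ a : Fin K, W (t a.succ) (s a.succ) (J (e1 a)) (J (e2 a)))
  + (1 / (2 * ((K : ℝ) + 1))) * Dp i

/-!
Under `ĝ = e^{2Υ}g` the Weyl tensor is unchanged, the weights of the exponential factors cancel,
and the theorem reduces to the contraction identity
`ε_i{}^{i₂…i_{2k}} Φ W_{t₁}{}^{s₁u}{}_{i₂} Υ_u W ⋯ W = (2k−1)! Υ_i p_Φ(W)`.
Cramer's rule for the permutation matrix of a multi-index `L` gives
`Υ_i ε_L = ∑_m Υ_{L_m} ε_{L[m ↦ i]}`. Summed against the Pontrjagin integrand, all `2k` terms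
on the right are equal: a permutation moving slot `m` to the first slot (an exchange of two index
pairs, possibly followed by a swap inside a pair) changes `ε` and the integrand by the same sign,
by the symmetry of `Φ` and the antisymmetry of `W` in its last two slots.
-/

open Finset Equiv Matrix

theorem Matrix.sum_mulVec_mul_det_updateRow {n R : Type*} [Fintype n] [DecidableEq n]
    [CommRing R] (A : Matrix n n R) (x v : n → R) :
    ∑ m, (A *ᵥ x) m * (A.updateRow m v).det = A.det * (x ⬝ᵥ v) := by
  have hcramer : (fun m => (A.updateRow m v).det) = Aᵀ.cramer v := by
    ext m
    rw [Matrix.cramer_apply, Matrix.updateCol_transpose, Matrix.det_transpose]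
  calc ∑ m, (A *ᵥ x) m * (A.updateRow m v).det = (A *ᵥ x) ⬝ᵥ Aᵀ.cramer v := by
        rw [← hcramer]; rfl
    _ = x ⬝ᵥ (Aᵀ *ᵥ Aᵀ.cramer v) := by
        rw [Matrix.dotProduct_mulVec, Matrix.vecMul_transpose]
    _ = A.det * (x ⬝ᵥ v) := by
        rw [Matrix.mulVec_cramer, Matrix.det_transpose, dotProduct_smul, smul_eq_mul]

theorem vol_comp_perm {n : ℕ} (L : Fin n → Fin n) (π : Perm (Fin n)) :
    vol (L ∘ π) = Perm.sign π * vol L :=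
  det_permute π (Matrix.of fun a b => kron (L a) b)

theorem mul_vol_eq_sum_vol_update {n : ℕ} (x : Fin n → ℝ) (i : Fin n) (L : Fin n → Fin n) :
    x i * vol L = ∑ m, x (L m) * vol (Function.update L m i) := by
  set A : Matrix (Fin n) (Fin n) ℝ := Matrix.of fun a b => kron (L a) b
  have hrow : ∀ m, A.updateRow m (Pi.single i 1) =
      Matrix.of fun a b => kron (Function.update L m i a) b := by
    intro m
    ext a b
    rcases eq_or_ne a m with rfl | ha
    · simp [kron, Pi.single_apply, eq_comm]
    · simp [A, kron, ha]
  have hmulVec : ∀ m, (A *ᵥ x) m = x (L m) := by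
    intro m
    simp [A, Matrix.mulVec, dotProduct, kron]
  have hcramer := A.sum_mulVec_mul_det_updateRow x (Pi.single i 1)
  simp only [hrow, hmulVec, dotProduct_single, mul_one] at hcramer
  rw [mul_comm]
  exact hcramer.symm

def AlternatesUnder {n : ℕ} {α : Type*} (Q : (Fin n → α) → ℝ) (π : Perm (Fin n)) : Prop :=
  ∀ N, Q (N ∘ π) = Perm.sign π * Q N

theorem AlternatesUnder.mul {n : ℕ} {α : Type*} {Q : (Fin n → α) → ℝ} {σ τ : Perm (Fin n)}
    (hσ : AlternatesUnder Q σ) (hτ : AlternatesUnder Q τ) : AlternatesUnder Q (σ * τ) := by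
  intro N
  rw [Perm.coe_mul, ← Function.comp_assoc, hτ, hσ, Perm.sign_mul]
  push_cast
  ring

theorem sum_vol_update_mul_eq_of_alternatesUnder {n : ℕ} {Q : (Fin n → Fin n) → ℝ}
    {π : Perm (Fin n)} (hQ : AlternatesUnder Q π) (x : Fin n → ℝ) (i m : Fin n) :
    ∑ L, x (L m) * vol (Function.update L m i) * Q L
      = ∑ L, x (L (π m)) * vol (Function.update L (π m) i) * Q L := by
  rw [← (π.symm.arrowCongr (Equiv.refl (Fin n))).sum_comp]
  refine sum_congr rfl fun M _ => ?_
  have hupdate : Function.update (M ∘ π) m i = Function.update M (π m) i ∘ π := by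
    rw [Function.update_comp_equiv, symm_apply_apply]
  have hsign : ((Perm.sign π : ℤ) : ℝ) * (Perm.sign π : ℤ) = 1 := by
    rw [← Int.cast_mul, ← Units.val_mul, Int.units_mul_self, Units.val_one, Int.cast_one]
  change x (M (π m)) * vol (Function.update (M ∘ π) m i) * Q (M ∘ π) = _
  rw [hupdate, vol_comp_perm, hQ]
  linear_combination (x (M (π m)) * vol (Function.update M (π m) i) * Q M) * hsign

theorem mul_sum_vol_mul_eq_of_alternatesUnder {n : ℕ} (Q : (Fin n → Fin n) → ℝ) (x : Fin n → ℝ)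
    (i m₀ : Fin n)
    (hQ : ∀ m, ∃ π : Perm (Fin n), π m = m₀ ∧ AlternatesUnder Q π) :
    x i * ∑ L, vol L * Q L = n * ∑ L, x (L m₀) * vol (Function.update L m₀ i) * Q L := by
  calc x i * ∑ L, vol L * Q L
      = ∑ L, ∑ m, x (L m) * vol (Function.update L m i) * Q L := by
        simp_rw [mul_sum, ← mul_assoc, mul_vol_eq_sum_vol_update x i, sum_mul]
    _ = ∑ m : Fin n, ∑ L, x (L m₀) * vol (Function.update L m₀ i) * Q L := by
        rw [sum_comm]
        refine sum_congr rfl fun m _ => ?_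
        obtain ⟨π, rfl, hπ⟩ := hQ m
        exact sum_vol_update_mul_eq_of_alternatesUnder hπ x i m
    _ = n * ∑ L, x (L m₀) * vol (Function.update L m₀ i) * Q L := by
        rw [sum_const, card_univ, Fintype.card_fin, nsmul_eq_mul]

theorem d0_injective {k : ℕ} : Function.Injective (d0 (k := k)) := by
  intro a b h
  simpa [d0, Fin.ext_iff] using h

theorem d1_injective {k : ℕ} : Function.Injective (d1 (k := k)) := by
  intro a b h
  simpa [d1, Fin.ext_iff] using h

theorem d0_ne_d1 {k : ℕ} (a b : Fin k) : d0 a ≠ d1 b := by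
  simp only [d0, d1, ne_eq, Fin.ext_iff]
  omega

theorem exists_eq_d0_or_eq_d1 {k : ℕ} (m : Fin (2 * k)) : ∃ a, m = d0 a ∨ m = d1 a := by
  refine ⟨⟨m / 2, by omega⟩, ?_⟩
  simp only [d0, d1, Fin.ext_iff]
  omega

noncomputable def pontrjaginTerm {k : ℕ}
    (Φ : (Fin k → Fin (2 * k)) → (Fin k → Fin (2 * k)) → ℝ)
    (W : Fin (2 * k) → Fin (2 * k) → Fin (2 * k) → Fin (2 * k) → ℝ)
    (N : Fin (2 * k) → Fin (2 * k)) : ℝ :=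
  ∑ t : Fin k → Fin (2 * k), ∑ s : Fin k → Fin (2 * k),
    Φ t s * ∏ a : Fin k, W (t a) (s a) (N (d0 a)) (N (d1 a))

theorem pPhi_eq_sum_vol_mul_pontrjaginTerm {k : ℕ}
    (Φ : (Fin k → Fin (2 * k)) → (Fin k → Fin (2 * k)) → ℝ)
    (W : Fin (2 * k) → Fin (2 * k) → Fin (2 * k) → Fin (2 * k) → ℝ) :
    pPhi Φ W = (1 / (Nat.factorial (2 * k) : ℝ)) * ∑ L, vol L * pontrjaginTerm Φ W L :=
  rfl

section PontrjaginTerm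

variable {k : ℕ} {Φ : (Fin k → Fin (2 * k)) → (Fin k → Fin (2 * k)) → ℝ}
  {W : Fin (2 * k) → Fin (2 * k) → Fin (2 * k) → Fin (2 * k) → ℝ}

theorem pontrjaginTerm_comp_perm (hΦ : ∀ (σ : Perm (Fin k)) t s, Φ (t ∘ σ) (s ∘ σ) = Φ t s)
    {σ : Perm (Fin k)} {π : Perm (Fin (2 * k))}
    (h0 : ∀ a, π (d0 a) = d0 (σ a)) (h1 : ∀ a, π (d1 a) = d1 (σ a))
    (N : Fin (2 * k) → Fin (2 * k)) :
    pontrjaginTerm Φ W (N ∘ π) = pontrjaginTerm Φ W N := by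
  unfold pontrjaginTerm
  rw [← (σ.symm.arrowCongr (Equiv.refl (Fin (2 * k)))).sum_comp]
  refine sum_congr rfl fun t _ => ?_
  rw [← (σ.symm.arrowCongr (Equiv.refl (Fin (2 * k)))).sum_comp]
  refine sum_congr rfl fun s _ => ?_
  change Φ (t ∘ σ) (s ∘ σ) * ∏ a, W (t (σ a)) (s (σ a)) (N (π (d0 a))) (N (π (d1 a))) = _
  simp only [hΦ, h0, h1]
  rw [Equiv.prod_comp σ (fun b => W (t b) (s b) (N (d0 b)) (N (d1 b)))]

def pairSwap (a b : Fin k) : Perm (Fin (2 * k)) :=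
  swap (d0 a) (d0 b) * swap (d1 a) (d1 b)

theorem pairSwap_d0 (a b c : Fin k) : pairSwap a b (d0 c) = d0 (swap a b c) := by
  rw [pairSwap, Perm.coe_mul, Function.comp_apply,
    swap_apply_of_ne_of_ne (d0_ne_d1 c a) (d0_ne_d1 c b), d0_injective.swap_apply]

theorem pairSwap_d1 (a b c : Fin k) : pairSwap a b (d1 c) = d1 (swap a b c) := by
  rw [pairSwap, Perm.coe_mul, Function.comp_apply, d1_injective.swap_apply,
    swap_apply_of_ne_of_ne (d0_ne_d1 a _).symm (d0_ne_d1 b _).symm]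

theorem sign_pairSwap (a b : Fin k) : Perm.sign (pairSwap a b) = 1 := by
  simp only [pairSwap, Perm.sign_mul, Perm.sign_swap', d0_injective.eq_iff, d1_injective.eq_iff]
  split_ifs <;> rfl

theorem alternatesUnder_pairSwap (hΦ : ∀ (σ : Perm (Fin k)) t s, Φ (t ∘ σ) (s ∘ σ) = Φ t s)
    (a b : Fin k) : AlternatesUnder (pontrjaginTerm Φ W) (pairSwap a b) := by
  intro N
  rw [sign_pairSwap, pontrjaginTerm_comp_perm hΦ (pairSwap_d0 a b) (pairSwap_d1 a b)]
  simp

theorem alternatesUnder_swap_d0_d1 (hW : ∀ a b c d, W a b c d = - W a b d c) (a : Fin k) :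
    AlternatesUnder (pontrjaginTerm Φ W) (swap (d0 a) (d1 a)) := by
  intro N
  have hfactor : ∀ (t s : Fin k → Fin (2 * k)) (b : Fin k),
      W (t b) (s b) (N (swap (d0 a) (d1 a) (d0 b))) (N (swap (d0 a) (d1 a) (d1 b)))
        = (if b = a then -1 else 1) * W (t b) (s b) (N (d0 b)) (N (d1 b)) := by
    intro t s b
    rcases eq_or_ne b a with rfl | hb
    · rw [swap_apply_left, swap_apply_right, hW, if_pos rfl]
      ring
    · rw [swap_apply_of_ne_of_ne (d0_injective.ne hb) (d0_ne_d1 b a),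
        swap_apply_of_ne_of_ne (d0_ne_d1 a b).symm (d1_injective.ne hb), if_neg hb, one_mul]
  rw [Perm.sign_swap (d0_ne_d1 a a)]
  simp only [pontrjaginTerm, Function.comp_apply, hfactor, prod_mul_distrib, prod_ite_eq',
    mem_univ, if_true, mul_sum]
  push_cast
  refine sum_congr rfl fun t _ => sum_congr rfl fun s _ => ?_
  ring

theorem exists_perm_apply_eq_d0 (hΦ : ∀ (σ : Perm (Fin k)) t s, Φ (t ∘ σ) (s ∘ σ) = Φ t s)
    (hW : ∀ a b c d, W a b c d = - W a b d c) (a₀ : Fin k) (m : Fin (2 * k)) :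
    ∃ π, π m = d0 a₀ ∧ AlternatesUnder (pontrjaginTerm Φ W) π := by
  obtain ⟨a, rfl | rfl⟩ := exists_eq_d0_or_eq_d1 m
  · exact ⟨pairSwap a a₀, by rw [pairSwap_d0, swap_apply_left], alternatesUnder_pairSwap hΦ a a₀⟩
  · refine ⟨swap (d0 a₀) (d1 a₀) * pairSwap a a₀, ?_,
      (alternatesUnder_swap_d0_d1 hW a₀).mul (alternatesUnder_pairSwap hΦ a a₀)⟩
    rw [Perm.coe_mul, Function.comp_apply, pairSwap_d1, swap_apply_left, swap_apply_right]

end PontrjaginTerm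

section Cotton

variable {K : ℕ}
  (Φ : (Fin (K + 1) → Fin (2 * (K + 1))) → (Fin (K + 1) → Fin (2 * (K + 1))) → ℝ)
  (W : Fin (2 * (K + 1)) → Fin (2 * (K + 1)) → Fin (2 * (K + 1)) → Fin (2 * (K + 1)) → ℝ)

noncomputable def cottonTerm (ε : (Fin (2 * (K + 1)) → Fin (2 * (K + 1))) → ℝ)
    (C : Fin (2 * (K + 1)) → Fin (2 * (K + 1)) → Fin (2 * (K + 1)) → ℝ)
    (i : Fin (2 * (K + 1))) : ℝ :=
  ∑ J : Fin (2 * K + 1) → Fin (2 * (K + 1)), ε (Fin.cons i J) *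
    ∑ t : Fin (K + 1) → Fin (2 * (K + 1)), ∑ s : Fin (K + 1) → Fin (2 * (K + 1)),
      Φ t s * C (t 0) (s 0) (J 0) * ∏ a : Fin K, W (t a.succ) (s a.succ) (J (e1 a)) (J (e2 a))

theorem rhoPhi_eq_cottonTerm (ε : (Fin (2 * (K + 1)) → Fin (2 * (K + 1))) → ℝ)
    (C : Fin (2 * (K + 1)) → Fin (2 * (K + 1)) → Fin (2 * (K + 1)) → ℝ)
    (Dp : Fin (2 * (K + 1)) → ℝ) (i : Fin (2 * (K + 1))) :
    rhoPhi Φ ε W C Dp i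
      = 1 / (Nat.factorial (2 * K + 1) : ℝ) * cottonTerm Φ W ε C i
        + 1 / (2 * ((K : ℝ) + 1)) * Dp i :=
  rfl

theorem cottonTerm_smul_add (c e : ℝ) (ε : (Fin (2 * (K + 1)) → Fin (2 * (K + 1))) → ℝ)
    (C C' : Fin (2 * (K + 1)) → Fin (2 * (K + 1)) → Fin (2 * (K + 1)) → ℝ)
    (i : Fin (2 * (K + 1))) :
    cottonTerm Φ W (fun J => c * ε J) (fun a b d => e * (C a b d + C' a b d)) i
      = c * e * (cottonTerm Φ W ε C i + cottonTerm Φ W ε C' i) := by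
  simp only [cottonTerm, mul_add, add_mul, sum_add_distrib, mul_sum]
  congr 1 <;> exact sum_congr rfl fun J _ => sum_congr rfl fun t _ => sum_congr rfl fun s _ => by
    ring

theorem pontrjaginTerm_cons (u : Fin (2 * (K + 1))) (J : Fin (2 * K + 1) → Fin (2 * (K + 1))) :
    pontrjaginTerm Φ W (Fin.cons u J)
      = ∑ t : Fin (K + 1) → Fin (2 * (K + 1)), ∑ s : Fin (K + 1) → Fin (2 * (K + 1)),
          Φ t s * W (t 0) (s 0) u (J 0) *
            ∏ a : Fin K, W (t a.succ) (s a.succ) (J (e1 a)) (J (e2 a)) := by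
  have hd0 : ∀ a : Fin K, d0 a.succ = (e1 a).succ := fun a => by
    simp only [d0, e1, Fin.ext_iff, Fin.val_succ]; ring
  have hd1 : ∀ a : Fin K, d1 a.succ = (e2 a).succ := fun a => by
    simp only [d1, e2, Fin.ext_iff, Fin.val_succ]; ring
  have hd00 : d0 (0 : Fin (K + 1)) = 0 := rfl
  have hd10 : d1 (0 : Fin (K + 1)) = (0 : Fin (2 * K + 1)).succ := rfl
  unfold pontrjaginTerm
  refine sum_congr rfl fun t _ => sum_congr rfl fun s _ => ?_
  rw [Fin.prod_univ_succ, mul_assoc]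
  simp only [hd0, hd1, hd00, hd10, Fin.cons_zero, Fin.cons_succ]

theorem cottonTerm_vol_weyl (hΦ : ∀ (σ : Perm (Fin (K + 1))) t s, Φ (t ∘ σ) (s ∘ σ) = Φ t s)
    (hW : ∀ a b c d, W a b c d = - W a b d c) (Υ1 : Fin (2 * (K + 1)) → ℝ)
    (i : Fin (2 * (K + 1))) :
    cottonTerm Φ W vol (fun a b d => ∑ u, W a b u d * Υ1 u) i
      = (Nat.factorial (2 * K + 1) : ℝ) * (Υ1 i * pPhi Φ W) := by
  rw [pPhi_eq_sum_vol_mul_pontrjaginTerm]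
  set Q := pontrjaginTerm Φ W
  have hcons : cottonTerm Φ W vol (fun a b d => ∑ u, W a b u d * Υ1 u) i
      = ∑ L, Υ1 (L 0) * vol (Function.update L 0 i) * Q L := calc
    _ = ∑ p : Fin (2 * (K + 1)) × (Fin (2 * K + 1) → Fin (2 * (K + 1))),
          Υ1 p.1 * vol (Fin.cons i p.2) * Q (Fin.cons p.1 p.2) := by
      rw [cottonTerm, Fintype.sum_prod_type]
      conv_rhs => rw [sum_comm]
      refine sum_congr rfl fun J _ => ?_
      simp only [Q, pontrjaginTerm_cons, mul_sum, sum_mul]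
      rw [sum_congr rfl fun t _ => sum_comm, sum_comm]
      exact sum_congr rfl fun u _ => sum_congr rfl fun t _ => sum_congr rfl fun s _ => by ring
    _ = ∑ L, Υ1 (L 0) * vol (Function.update L 0 i) * Q L :=
      Fintype.sum_equiv (Fin.consEquiv fun _ => Fin (2 * (K + 1))) _ _ fun p => by
        simp only [Fin.consEquiv, Equiv.coe_fn_mk, Fin.cons_zero, Fin.update_cons_zero]
  have hcount :=
    mul_sum_vol_mul_eq_of_alternatesUnder Q Υ1 i 0 (exists_perm_apply_eq_d0 hΦ hW 0)
  have hfact : (Nat.factorial (2 * (K + 1)) : ℝ) = 2 * (K + 1) * Nat.factorial (2 * K + 1) := by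
    rw [show 2 * (K + 1) = 2 * K + 1 + 1 by ring, Nat.factorial_succ]
    push_cast
    ring
  have hS : ∑ L, Υ1 (L 0) * vol (Function.update L 0 i) * Q L
      = Υ1 i * (∑ L, vol L * Q L) / (2 * (K + 1)) := by
    rw [hcount]
    push_cast
    field_simp
  rw [hcons, hS, hfact]
  field_simp

end Cotton

/-- The quantities of `ĝ = e^{2Υ}g` enter through their transformation laws in an oriented
orthonormal frame, with `Υ1 = dΥ`: `ε̂ = e^{(2−2k)Υ} ε`,
`Ĉ_t{}^s{}_a = e^{−2Υ}(C_t{}^s{}_a + W_t{}^{su}{}_a Υ_u)`, `Ŵ = W` and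
`∇̂_i p_Φ(Ŵ) = e^{−2kΥ}(∇_i p_Φ(W) − 2kΥ_i p_Φ(W))`. -/
theorem rhoPhi_conformally_invariant_general (K : ℕ)
    (Φ : (Fin (K + 1) → Fin (2 * (K + 1))) → (Fin (K + 1) → Fin (2 * (K + 1))) → ℝ)
    (hΦ : ∀ (σ : Equiv.Perm (Fin (K + 1))) t s, Φ (t ∘ σ) (s ∘ σ) = Φ t s)
    (W : Fin (2 * (K + 1)) → Fin (2 * (K + 1)) → Fin (2 * (K + 1)) → Fin (2 * (K + 1)) → ℝ)
    (hW2 : ∀ a b c d, W a b c d = - W a b d c)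
    (C : Fin (2 * (K + 1)) → Fin (2 * (K + 1)) → Fin (2 * (K + 1)) → ℝ)
    (Υ : ℝ) (Υ1 : Fin (2 * (K + 1)) → ℝ)
    (Dp : Fin (2 * (K + 1)) → ℝ) :
    ∀ i, Real.exp (2 * ((K : ℝ) + 1) * Υ) *
      rhoPhi (K := K) Φ
        (fun J => Real.exp ((2 - 2 * ((K : ℝ) + 1)) * Υ) * vol J)
        W
        (fun a b c => Real.exp (-2 * Υ) * (C a b c + ∑ u, W a b u c * Υ1 u))
        (fun i' => Real.exp (-2 * ((K : ℝ) + 1) * Υ) *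
          (Dp i' - 2 * ((K : ℝ) + 1) * Υ1 i' * pPhi (k := K + 1) Φ W)) i
      = rhoPhi (K := K) Φ vol W C Dp i := by
  intro i
  have hcotton : Real.exp (2 * ((K : ℝ) + 1) * Υ) *
      (Real.exp ((2 - 2 * ((K : ℝ) + 1)) * Υ) * Real.exp (-2 * Υ)) = 1 := by
    rw [← Real.exp_add, ← Real.exp_add, ← Real.exp_zero]
    ring_nf
  have hgradient : Real.exp (2 * ((K : ℝ) + 1) * Υ) * Real.exp (-2 * ((K : ℝ) + 1) * Υ) = 1 := by
    rw [← Real.exp_add, ← Real.exp_zero]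
    ring_nf
  have hfact : 1 / (Nat.factorial (2 * K + 1) : ℝ) * Nat.factorial (2 * K + 1) = 1 :=
    one_div_mul_cancel (by positivity)
  have hdim : 1 / (2 * ((K : ℝ) + 1)) * (2 * ((K : ℝ) + 1)) = 1 :=
    one_div_mul_cancel (by positivity)
  rw [rhoPhi_eq_cottonTerm, rhoPhi_eq_cottonTerm, cottonTerm_smul_add,
    cottonTerm_vol_weyl Φ W hΦ hW2]
  set E := Real.exp (2 * ((K : ℝ) + 1) * Υ)
  set P := Υ1 i * pPhi Φ W
  linear_combination
    (1 / (Nat.factorial (2 * K + 1) : ℝ) * cottonTerm Φ W vol C i + P) * hcotton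
    + (1 / (2 * ((K : ℝ) + 1)) * Dp i - P) * hgradient
    + P * E * (Real.exp ((2 - 2 * ((K : ℝ) + 1)) * Υ) * Real.exp (-2 * Υ)) * hfact
    - P * E * Real.exp (-2 * ((K : ℝ) + 1) * Υ) * hdim

/-- conformal invariance of `ρ^Φ` in dimension `n = 2k` (`k = K+1`)
on an oriented pseudo-Riemannian manifold: `e^{2kΥ} ρ̂^Φ_i = ρ^Φ_i`.  Pointwise in
an oriented orthonormal frame, the hatted quantities are computed from
`ĝ = e^{2Υ}g` via the exact transformation laws
`ε̂_i{}^{i₂…i_{2k}} = e^{(2−2k)Υ} ε_i{}^{i₂…i_{2k}}`,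
`Ĉ_t{}^s{}_a = e^{−2Υ}(C_t{}^s{}_a + W_t{}^{su}{}_a Υ_u)`,
`Ŵ_t{}^s{}_{ab} = W_t{}^s{}_{ab}` and
`∇̂_i p_Φ(Ŵ) = e^{−2kΥ}(∇_i p_Φ(W) − 2kΥ_i p_Φ(W))`. -/
theorem rhoPhi_conformally_invariant (K : ℕ)
    (Φ : (Fin (K + 1) → Fin (2 * (K + 1))) → (Fin (K + 1) → Fin (2 * (K + 1))) → ℝ)
    (hΦ : ∀ (σ : Equiv.Perm (Fin (K + 1))) t s, Φ (t ∘ σ) (s ∘ σ) = Φ t s)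
    (W : Fin (2 * (K + 1)) → Fin (2 * (K + 1)) → Fin (2 * (K + 1)) → Fin (2 * (K + 1)) → ℝ)
    (hW1 : ∀ a b c d, W a b c d = - W b a c d)
    (hW2 : ∀ a b c d, W a b c d = - W a b d c)
    (hW3 : ∀ a b c d, W a b c d = W c d a b)
    (hWB : ∀ a b c d, W a b c d + W b c a d + W c a b d = 0)
    (hWtf : ∀ a c, ∑ s, W a s c s = 0)
    (C : Fin (2 * (K + 1)) → Fin (2 * (K + 1)) → Fin (2 * (K + 1)) → ℝ)
    (hC : ∀ a b c, C a b c = - C b a c)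
    (Υ : ℝ) (Υ1 : Fin (2 * (K + 1)) → ℝ)
    (Dp : Fin (2 * (K + 1)) → ℝ) :
    ∀ i, Real.exp (2 * ((K : ℝ) + 1) * Υ) *
      rhoPhi (K := K) Φ
        (fun J => Real.exp ((2 - 2 * ((K : ℝ) + 1)) * Υ) * vol J)
        W
        (fun a b c => Real.exp (-2 * Υ) * (C a b c + ∑ u, W a b u c * Υ1 u))
        (fun i' => Real.exp (-2 * ((K : ℝ) + 1) * Υ) *
          (Dp i' - 2 * ((K : ℝ) + 1) * Υ1 i' * pPhi (k := K + 1) Φ W)) i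
      = rhoPhi (K := K) Φ vol W C Dp i :=
  rhoPhi_conformally_invariant_general K Φ hΦ W hW2 C Υ Υ1 Dp
end

section
/- In dimension four, the vector space of natural conformally invariant trace-free symmetric (0,2)-tensor fields of weight −2 (i.e., built linearly from partial contractions of ∇²Rm ⊗ g and Rm ⊗ Rm ⊗ g) is one-dimensional, spanned by the Bach tensor B_{ij} = ∇^s C_{sij} + W_{isjt} P^{st}. Specifically: if a W_{isjt}P^{st} + b·tf(P_i^s P_{sj}) + c·tf(J P_{ij}) + e·tf(∇²_{ij} J) is conformally invariant for all Riemannian four-manifolds, then a = b = c = e = 0. -/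
/-!
The conformal variation is linear in the pointwise data `(W, P, ∇J, ∇Υ, ∇²Υ, ∇²ΔΥ)`, which can
be prescribed independently. Rank-one data `eₖ ⊗ eₖ` isolate the coefficients one at a time:
`∇²ΔΥ` alone sees only `e`; `P ⊥ ∇²Υ` sees only `c` and `e`; `P = ∇²Υ`, read off its support,
sees only `b`, `c`, `e`; and a nonzero algebraic Weyl tensor paired with `∇²Υ` sees only `a`.
-/

open scoped BigOperators

open Matrix

structure IsWeylTensor {R : Type*} [CommRing R] {n : ℕ} (W : Fin n → Fin n → Fin n → Fin n → R) :
    Prop where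
  antisymm_left : ∀ i j l m, W i j l m = - W j i l m
  antisymm_right : ∀ i j l m, W i j l m = - W i j m l
  pair_symm : ∀ i j l m, W i j l m = W l m i j
  bianchi : ∀ i j l m, W i j l m + W j l i m + W l i j m = 0
  trace_eq_zero : ∀ i l, ∑ s, W i s l s = 0

namespace IsWeylTensor

variable {R S : Type*} [CommRing R] [CommRing S] {n : ℕ}

theorem zero : IsWeylTensor (0 : Fin n → Fin n → Fin n → Fin n → R) :=
  ⟨fun _ _ _ _ => by simp, fun _ _ _ _ => by simp, fun _ _ _ _ => rfl,
    fun _ _ _ _ => by simp, fun _ _ => by simp⟩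

theorem map {W : Fin n → Fin n → Fin n → Fin n → R} (hW : IsWeylTensor W) (f : R →+* S) :
    IsWeylTensor fun i j l m => f (W i j l m) where
  antisymm_left i j l m := by rw [hW.antisymm_left, map_neg]
  antisymm_right i j l m := by rw [hW.antisymm_right, map_neg]
  pair_symm i j l m := by rw [hW.pair_symm]
  bianchi i j l m := by rw [← map_add, ← map_add, hW.bianchi, map_zero]
  trace_eq_zero i l := by rw [← map_sum, hW.trace_eq_zero, map_zero]

end IsWeylTensor

/-- Sectional curvature `2` on the planes `e₀e₁`, `e₂e₃` and `-1` on the other four, with a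
diagonal curvature operator; every row of sectional curvatures sums to `0`, so it is trace-free. -/
def weylExample : Fin 4 → Fin 4 → Fin 4 → Fin 4 → ℤ := fun i j l m =>
  (if i = j then 0 else if i.val + j.val = 1 ∨ i.val + j.val = 5 then 2 else -1)
  * ((if i = l then 1 else 0) * (if j = m then 1 else 0)
     - (if i = m then 1 else 0) * (if j = l then 1 else 0))

theorem isWeylTensor_weylExample : IsWeylTensor weylExample :=
  ⟨by decide, by decide, by decide, by decide, by decide⟩


/-- The conformal linearization of `a W_{isjt}P^{st} + b tf(P_i^sP_{sj}) + c tf(JP_{ij})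
+ e tf(∇²_{ij}J)` in an orthonormal frame, at `dJ = ∇J`, `Υ1 = ∇Υ`, `Υ2 = ∇²Υ`, `U = ∇²ΔΥ`. -/
noncomputable def conformalVariation (a b c e : ℝ) (W : Fin 4 → Fin 4 → Fin 4 → Fin 4 → ℝ)
    (P : Matrix (Fin 4) (Fin 4) ℝ) (dJ Υ1 : Fin 4 → ℝ) (Υ2 U : Matrix (Fin 4) (Fin 4) ℝ)
    (i j : Fin 4) : ℝ :=
  a * (-(∑ s, ∑ u, W i s j u * Υ2 s u))
  + b * (-2 * (∑ s, P i s * Υ2 s j)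
      + (1 / 2) * (∑ s, ∑ u, P s u * Υ2 s u) * kron i j)
  + c * (-(∑ s, P s s) * Υ2 i j - (∑ s, Υ2 s s) * P i j
      + (1 / 2) * (∑ s, P s s) * (∑ s, Υ2 s s) * kron i j)
  + e * (-(U i j) - 2 * (∑ s, P s s) * Υ2 i j
      - 3 * (Υ1 i * dJ j + Υ1 j * dJ i)
      + (1 / 4) * ((∑ s, U s s) + 2 * (∑ s, P s s) * (∑ s, Υ2 s s)
          + 6 * (∑ s, Υ1 s * dJ s)) * kron i j)

def IsConformallyInvariant (a b c e : ℝ) : Prop :=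
  ∀ W, IsWeylTensor W → ∀ P : Matrix (Fin 4) (Fin 4) ℝ, P.IsSymm → ∀ dJ Υ1 Υ2, Υ2.IsSymm →
    ∀ U, U.IsSymm → ∀ i j, conformalVariation a b c e W P dJ Υ1 Υ2 U i j = 0

theorem isSymm_single_self {n : Type*} [DecidableEq n] {α : Type*} [Zero α] (k : n) (x : α) :
    (single k k x).IsSymm :=
  IsSymm.ext fun i j => by simp only [single_apply, and_comm]

section

variable {a b c e : ℝ}

theorem conformalVariation_U_single :
    conformalVariation a b c e 0 0 0 0 0 (single 0 0 1) 0 0 = -(3 / 4) * e := by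
  simp [conformalVariation, kron, single_apply]
  ring

theorem conformalVariation_P_Υ2_orthogonal :
    conformalVariation a b c e 0 (single 0 0 1) 0 0 (single 1 1 1) 0 0 0 = (e - c) / 2 := by
  simp [conformalVariation, kron, Fin.sum_univ_four, single_apply]
  ring

theorem conformalVariation_P_eq_Υ2 :
    conformalVariation a b c e 0 (single 0 0 1) 0 0 (single 0 0 1) 0 1 1 = (b + c + e) / 2 := by
  simp [conformalVariation, kron, Fin.sum_univ_four, single_apply]
  ring

theorem conformalVariation_weylExample :
    conformalVariation a b c e (fun i j l m => Int.castRingHom ℝ (weylExample i j l m)) 0 0 0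
      (single 0 0 1) 0 1 1 = -2 * a := by
  simp [conformalVariation, kron, Fin.sum_univ_four, single_apply, weylExample]
  ring

theorem IsConformallyInvariant.eq_zero (h : IsConformallyInvariant a b c e) :
    a = 0 ∧ b = 0 ∧ c = 0 ∧ e = 0 := by
  have hU : -(3 / 4) * e = 0 := conformalVariation_U_single.symm.trans
    (h 0 .zero 0 isSymm_zero 0 0 0 isSymm_zero _ (isSymm_single_self 0 1) 0 0)
  have hPΥ : (e - c) / 2 = 0 := conformalVariation_P_Υ2_orthogonal.symm.trans
    (h 0 .zero _ (isSymm_single_self 0 1) 0 0 _ (isSymm_single_self 1 1) 0 isSymm_zero 0 0)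
  have hPP : (b + c + e) / 2 = 0 := conformalVariation_P_eq_Υ2.symm.trans
    (h 0 .zero _ (isSymm_single_self 0 1) 0 0 _ (isSymm_single_self 0 1) 0 isSymm_zero 1 1)
  have hW : -2 * a = 0 := conformalVariation_weylExample.symm.trans
    (h _ (isWeylTensor_weylExample.map (Int.castRingHom ℝ)) 0 isSymm_zero 0 0 _
      (isSymm_single_self 0 1) 0 isSymm_zero 1 1)
  exact ⟨by linarith, by linarith, by linarith, by linarith⟩

end

/-- in dimension four, the space of natural conformally invariant
trace-free symmetric `(0,2)`-tensor fields of weight `−2` is spanned by the Bach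
tensor.  Specifically: if the linear combination
`a W_{isjt}P^{st} + b tf(P_i^sP_{sj}) + c tf(JP_{ij}) + e tf(∇²_{ij}J)` is
conformally invariant — equivalently, its conformal linearization (given by the
formulas `D_g(W_{isjt}P^{st})(Υ) = −W_{isjt}Υ^{st}`,
`D_g tf(P_i^sP_{sj})(Υ) = −2P_i^sΥ_{sj} + ½⟨P,∇²Υ⟩g_{ij}`,
`D_g tf(JP_{ij})(Υ) = −JΥ_{ij} − (ΔΥ)P_{ij} + ½JΔΥ g_{ij}`,
`D_g tf(∇²_{ij}J)(Υ) = −∇²_{ij}ΔΥ − 2J∇²_{ij}Υ − 3(Υ_i∇_jJ + Υ_j∇_iJ)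
  + ¼(Δ²Υ + 2JΔΥ + 6⟨∇Υ,∇J⟩)g_{ij}`) vanishes for all Riemannian four-manifolds
`(M⁴,g)` and all `Υ ∈ C^∞(M)` — then `a = b = c = e = 0`.  Pointwise, the freedom
in `(g, Υ)` is encoded by arbitrary algebraic data in an orthonormal frame:
a Weyl-type tensor `W`, a symmetric `P` (with `J = tr P`), `dJ = ∇J`, `Υ1 = ∇Υ`,
a symmetric `Υ2 = ∇²Υ` (with `ΔΥ = tr Υ2`), and a symmetric `U = ∇²ΔΥ`
(with `Δ²Υ = tr U`). -/
theorem bach_spans (a b c e : ℝ)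
    (h : ∀ (W : Fin 4 → Fin 4 → Fin 4 → Fin 4 → ℝ),
      (∀ i j l m, W i j l m = - W j i l m) →
      (∀ i j l m, W i j l m = - W i j m l) →
      (∀ i j l m, W i j l m = W l m i j) →
      (∀ i j l m, W i j l m + W j l i m + W l i j m = 0) →
      (∀ i l, ∑ s, W i s l s = 0) →
      ∀ (P : Fin 4 → Fin 4 → ℝ), (∀ i j, P i j = P j i) →
      ∀ (dJ Υ1 : Fin 4 → ℝ),
      ∀ (Υ2 : Fin 4 → Fin 4 → ℝ), (∀ i j, Υ2 i j = Υ2 j i) →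
      ∀ (U : Fin 4 → Fin 4 → ℝ), (∀ i j, U i j = U j i) →
      ∀ i j,
        a * (-(∑ s, ∑ u, W i s j u * Υ2 s u))
        + b * (-2 * (∑ s, P i s * Υ2 s j)
            + (1 / 2) * (∑ s, ∑ u, P s u * Υ2 s u) * kron i j)
        + c * (-(∑ s, P s s) * Υ2 i j - (∑ s, Υ2 s s) * P i j
            + (1 / 2) * (∑ s, P s s) * (∑ s, Υ2 s s) * kron i j)
        + e * (-(U i j) - 2 * (∑ s, P s s) * Υ2 i j
            - 3 * (Υ1 i * dJ j + Υ1 j * dJ i)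
            + (1 / 4) * ((∑ s, U s s) + 2 * (∑ s, P s s) * (∑ s, Υ2 s s)
                + 6 * (∑ s, Υ1 s * dJ s)) * kron i j)
        = 0) :
    a = 0 ∧ b = 0 ∧ c = 0 ∧ e = 0 :=
  IsConformallyInvariant.eq_zero fun W hW P hP dJ Υ1 Υ2 hΥ2 U hU =>
    h W hW.antisymm_left hW.antisymm_right hW.pair_symm hW.bianchi hW.trace_eq_zero
      P (fun i j => hP.apply j i) dJ Υ1 Υ2 (fun i j => hΥ2.apply j i) U (fun i j => hU.apply j i)
end
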